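/- Let m ≥ 3 and suppose the tuple x = (x_1, …, x_m) of real numbers satisfies conditions (1) and (2). Then x_i > 0 for every i with 1 ≤ i ≤ m. -/

import Mathlib

/-- The matrix `A = [[0, 1], [-1, t]]` associated to an edge with cross ratio `t`. -/
noncomputable def crossA (t : ℝ) : Matrix (Fin 2) (Fin 2) ℝ := !![0, 1; -1, t]

/-- The partial product `W_j = A_1 A_2 ⋯ A_j` of the matrices associated to the
cross ratios `x_1, …, x_m` (1-indexed: `crossW m x j` is `W_j`). -/
noncomputable def crossW (m : ℕ) (x : Fin m → ℝ) (j : ℕ) : Matrix (Fin 2) (Fin 2) ℝ :=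
  ((List.ofFn fun i : Fin m => crossA (x i)).take j).prod

/-- Condition (1): `W_m = -I`. -/
def Cond1 (m : ℕ) (x : Fin m → ℝ) : Prop := crossW m x m = -1

/-- Condition (2) (strict sign condition): `a_1 = 0`, `d_{m-1} = 0`,
`a_j < 0` for `2 ≤ j ≤ m-1`, `d_j > 0` for `1 ≤ j ≤ m-2`, and
`b_j > 0`, `c_j < 0` for `1 ≤ j ≤ m-1`. -/
def Cond2 (m : ℕ) (x : Fin m → ℝ) : Prop :=
  crossW m x 1 0 0 = 0 ∧ crossW m x (m - 1) 1 1 = 0 ∧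
  (∀ j, 2 ≤ j → j ≤ m - 1 → crossW m x j 0 0 < 0) ∧
  (∀ j, 1 ≤ j → j ≤ m - 2 → 0 < crossW m x j 1 1) ∧
  (∀ j, 1 ≤ j → j ≤ m - 1 → 0 < crossW m x j 0 1 ∧ crossW m x j 1 0 < 0)

/-- Condition (3) (weak sign condition): as in (2) but with non-strict inequalities. -/
def Cond3 (m : ℕ) (x : Fin m → ℝ) : Prop :=
  crossW m x 1 0 0 = 0 ∧ crossW m x (m - 1) 1 1 = 0 ∧
  (∀ j, 2 ≤ j → j ≤ m - 1 → crossW m x j 0 0 ≤ 0) ∧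
  (∀ j, 1 ≤ j → j ≤ m - 2 → 0 ≤ crossW m x j 1 1) ∧
  (∀ j, 1 ≤ j → j ≤ m - 1 → 0 ≤ crossW m x j 0 1 ∧ crossW m x j 1 0 ≤ 0)

/-!
`x_1` is the entry `d_1` of `W_1 = A_1`, hence positive. For `j ≥ 1`, multiplying `W_j` by
`A_{j+1}` gives `b_{j+1} = a_j + b_j x_{j+1}`; since `b_j > 0`, the sign of `x_{j+1}` is that of
`b_{j+1} - a_j`, which is positive: either `b_{j+1} > 0 ≥ a_j`, or `j + 1 = m`, where
`b_m = 0` by `W_m = -I` and `a_{m-1} < 0`.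
-/

section CrossW

variable {m : ℕ} (x : Fin m → ℝ)

lemma crossW_succ {j : ℕ} (hj : j < m) :
    crossW m x (j + 1) = crossW m x j * crossA (x ⟨j, hj⟩) := by
  unfold crossW
  rw [List.prod_take_succ _ j (by simpa using hj)]
  simp

lemma crossW_one (hm : 0 < m) : crossW m x 1 = crossA (x ⟨0, hm⟩) :=
  (crossW_succ x hm).trans (by simp [crossW])

lemma crossW_succ_zero_one {j : ℕ} (hj : j < m) :
    crossW m x (j + 1) 0 1 = crossW m x j 0 0 + crossW m x j 0 1 * x ⟨j, hj⟩ := by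
  simp [crossW_succ x hj, crossA, Matrix.mul_apply, Fin.sum_univ_two]

lemma pos_of_crossW_zero_one_lt {j : ℕ} (hj : j < m) (hb : 0 < crossW m x j 0 1)
    (hab : crossW m x j 0 0 < crossW m x (j + 1) 0 1) : 0 < x ⟨j, hj⟩ := by
  rw [crossW_succ_zero_one x hj] at hab
  exact pos_of_mul_pos_right (by linarith) hb.le

end CrossW

/-- Cross ratios are positive: if `m ≥ 3` and the tuple `x` satisfies conditions (1)
and (2), then every `x_i` is positive. -/
theorem cross_ratios_pos (m : ℕ) (hm : 3 ≤ m) (x : Fin m → ℝ)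
    (h1 : Cond1 m x) (h2 : Cond2 m x) :
    ∀ i : Fin m, 0 < x i := by
  obtain ⟨ha1, -, ha, hd, hbc⟩ := h2
  rintro ⟨j, hj⟩
  rcases Nat.eq_zero_or_pos j with rfl | hj0
  · simpa [crossW_one x hj, crossA] using hd 1 le_rfl (by omega)
  refine pos_of_crossW_zero_one_lt x hj (hbc j hj0 (by omega)).1 ?_
  rcases Nat.lt_or_ge (j + 1) m with hlt | hge
  · have ha_nonpos : crossW m x j 0 0 ≤ 0 := by
      rcases eq_or_ne j 1 with rfl | hj1
      · exact ha1.le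
      · exact (ha j (by omega) (by omega)).le
    linarith [(hbc (j + 1) (by omega) (by omega)).1]
  · have hb_last : crossW m x (j + 1) 0 1 = 0 := by
      rw [show j + 1 = m by omega, h1]
      simp
    rw [hb_last]
    exact ha j (by omega) (by omega)
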